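/- Let τ > 0, ε > 0, let Q (m×m) and R (p×p) be real symmetric positive definite matrices with positive semidefinite square roots Q^{1/2}, R^{1/2}, and set Q̃ = Q/(1 + ε²), R̃ = R/(1 + ε²). Let X₀ be a real symmetric positive definite n×n matrix, x₀, x̄ ∈ ℝⁿ, and d₁, d₂ > 0. Let v : [0,τ] → ℝᵐ, w : [0,τ] → ℝᵖ and z : [0,τ] → ℝʳ be measurable, and let Δ₁(t) (m×r) and Δ₂(t) (p×r) be measurable matrix-valued functions such that for every t ∈ [0,τ] the operator norm of [Δ₁(t)ᵀQ^{1/2} Δ₂(t)ᵀR^{1/2}] is at most 1. Define ṽ(t) = Δ₁(t)z(t) + v(t) and w̃(t) = Δ₂(t)z(t) + w(t), and assume all the quadratic integrands below are integrable on [0,τ]. If ∫₀^τ (v(t)ᵀQ v(t) + w(t)ᵀR w(t)) dt ≤ d₁ and (x̄ − x₀)ᵀX₀(x̄ − x₀) ≤ d₂, then (x̄ − x₀)ᵀX₀(x̄ − x₀) + ∫₀^τ (ṽ(t)ᵀQ̃ṽ(t) + w̃(t)ᵀR̃w̃(t)) dt ≤ ((1 + 1/ε²)/(1 + ε²))·d₁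 + d₂ + ∫₀^τ ‖z(t)‖² dt. -/

import Mathlib

/-!
Write `Q = Q½²`, `R = R½²` and stack the weighted signals in `ℝᵐ ⊕ ℝᵖ`: the perturbed noise becomes
`a + b` with `a = Mᵀ z`, `b = (Q½ v, R½ w)`, where `M = [Δ₁ᵀQ½ Δ₂ᵀR½]`. Since `‖M‖ ≤ 1`, also
`‖Mᵀ‖ ≤ 1`, so `‖a‖ ≤ ‖z‖`, and `‖a + b‖² ≤ (1 + ε²)‖a‖² + (1 + 1/ε²)‖b‖²` bounds the weighted
energy of `(ṽ, w̃)` pointwise in time; integrating over `[0, τ]` gives the constraint.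
-/

open Matrix

lemma add_sq_le_weighted (x y : ℝ) {ε : ℝ} (hε : ε ≠ 0) :
    (x + y) ^ 2 ≤ (1 + ε ^ 2) * x ^ 2 + (1 + 1 / ε ^ 2) * y ^ 2 := by
  have key : (1 + ε ^ 2) * x ^ 2 + (1 + 1 / ε ^ 2) * y ^ 2 - (x + y) ^ 2
      = (ε * x - y / ε) ^ 2 := by
    field_simp
    ring
  linarith [sq_nonneg (ε * x - y / ε)]

lemma norm_add_sq_le_weighted {E : Type*} [SeminormedAddGroup E] (a b : E) {ε : ℝ}
    (hε : ε ≠ 0) :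
    ‖a + b‖ ^ 2 ≤ (1 + ε ^ 2) * ‖a‖ ^ 2 + (1 + 1 / ε ^ 2) * ‖b‖ ^ 2 :=
  (pow_le_pow_left₀ (norm_nonneg _) (norm_add_le a b) 2).trans
    (add_sq_le_weighted _ _ hε)

lemma LinearMap.norm_adjoint_apply_le {𝕜 E F : Type*} [RCLike 𝕜]
    [NormedAddCommGroup E] [InnerProductSpace 𝕜 E] [FiniteDimensional 𝕜 E]
    [NormedAddCommGroup F] [InnerProductSpace 𝕜 F] [FiniteDimensional 𝕜 F]
    {f : E →ₗ[𝕜] F} (hf : ∀ x, ‖f x‖ ≤ ‖x‖) (y : F) : ‖f.adjoint y‖ ≤ ‖y‖ := by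
  set x := f.adjoint y
  have hsq : ‖x‖ ^ 2 ≤ ‖x‖ * ‖y‖ :=
    calc ‖x‖ ^ 2 = RCLike.re (inner 𝕜 x x) := (inner_self_eq_norm_sq x).symm
      _ = RCLike.re (inner 𝕜 (f x) y) := by rw [LinearMap.adjoint_inner_right]
      _ ≤ ‖f x‖ * ‖y‖ := re_inner_le_norm _ _
      _ ≤ ‖x‖ * ‖y‖ := mul_le_mul_of_nonneg_right (hf x) (norm_nonneg y)
  nlinarith [norm_nonneg x, norm_nonneg y]

lemma Matrix.norm_toEuclideanLin_transpose_apply_le {α β : Type*} [Fintype α] [Fintype β]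
    [DecidableEq α] [DecidableEq β] {M : Matrix β α ℝ}
    (hM : ∀ x, ‖M.toEuclideanLin x‖ ≤ ‖x‖) (y : EuclideanSpace ℝ β) :
    ‖Mᵀ.toEuclideanLin y‖ ≤ ‖y‖ := by
  rw [← conjTranspose_eq_transpose_of_trivial, toEuclideanLin_conjTranspose_eq_adjoint]
  exact LinearMap.norm_adjoint_apply_le hM y

lemma EuclideanSpace.norm_toLp_sq {ι : Type*} [Fintype ι] (x : ι → ℝ) :
    ‖WithLp.toLp 2 x‖ ^ 2 = x ⬝ᵥ x := by
  rw [← real_inner_self_eq_norm_sq, EuclideanSpace.inner_toLp_toLp]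
  rfl

lemma Matrix.dotProduct_mul_self_mulVec {ι : Type*} [Fintype ι] {S : Matrix ι ι ℝ}
    (hS : Sᵀ = S) (x : ι → ℝ) :
    x ⬝ᵥ (S * S) *ᵥ x = (S *ᵥ x) ⬝ᵥ (S *ᵥ x) := by
  rw [← mulVec_mulVec, dotProduct_mulVec, ← mulVec_transpose, hS]

lemma Matrix.sumElim_quadForm_eq_norm_sq {ι κ : Type*} [Fintype ι] [Fintype κ]
    {Qh : Matrix ι ι ℝ} {Rh : Matrix κ κ ℝ} (hQh : Qhᵀ = Qh) (hRh : Rhᵀ = Rh)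
    (v : ι → ℝ) (w : κ → ℝ) :
    v ⬝ᵥ (Qh * Qh) *ᵥ v + w ⬝ᵥ (Rh * Rh) *ᵥ w =
      ‖WithLp.toLp 2 (Sum.elim (Qh *ᵥ v) (Rh *ᵥ w))‖ ^ 2 := by
  rw [EuclideanSpace.norm_toLp_sq, sumElim_dotProduct_sumElim,
    dotProduct_mul_self_mulVec hQh, dotProduct_mul_self_mulVec hRh]

lemma perturbed_quadForm_le {ι κ ρ : Type*} [Fintype ι] [Fintype κ] [Fintype ρ]
    [DecidableEq ι] [DecidableEq κ] [DecidableEq ρ] {ε : ℝ} (hε : ε ≠ 0)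
    {Qh : Matrix ι ι ℝ} {Rh : Matrix κ κ ℝ} (hQh : Qhᵀ = Qh) (hRh : Rhᵀ = Rh)
    {Δ₁ : Matrix ι ρ ℝ} {Δ₂ : Matrix κ ρ ℝ}
    (hΔ : ∀ y, ‖(fromCols (Δ₁ᵀ * Qh) (Δ₂ᵀ * Rh)).toEuclideanLin y‖ ≤ ‖y‖)
    (v : ι → ℝ) (w : κ → ℝ) (z : ρ → ℝ) :
    (1 + ε ^ 2)⁻¹ * ((Δ₁ *ᵥ z + v) ⬝ᵥ (Qh * Qh) *ᵥ (Δ₁ *ᵥ z + v) +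
        (Δ₂ *ᵥ z + w) ⬝ᵥ (Rh * Rh) *ᵥ (Δ₂ *ᵥ z + w)) ≤
      (1 + 1 / ε ^ 2) / (1 + ε ^ 2) * (v ⬝ᵥ (Qh * Qh) *ᵥ v + w ⬝ᵥ (Rh * Rh) *ᵥ w) +
        z ⬝ᵥ z := by
  set a := WithLp.toLp 2 (Sum.elim (Qh *ᵥ Δ₁ *ᵥ z) (Rh *ᵥ Δ₂ *ᵥ z))
  set b := WithLp.toLp 2 (Sum.elim (Qh *ᵥ v) (Rh *ᵥ w))
  have ha : ‖a‖ ≤ ‖WithLp.toLp 2 z‖ := by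
    have hT : (fromCols (Δ₁ᵀ * Qh) (Δ₂ᵀ * Rh))ᵀ *ᵥ z =
        Sum.elim (Qh *ᵥ Δ₁ *ᵥ z) (Rh *ᵥ Δ₂ *ᵥ z) := by
      rw [transpose_fromCols, transpose_mul, transpose_mul, transpose_transpose,
        transpose_transpose, hQh, hRh, fromRows_mulVec, mulVec_mulVec, mulVec_mulVec]
    simpa only [toLpLin_toLp, toLin'_apply, hT] using
      norm_toEuclideanLin_transpose_apply_le hΔ (WithLp.toLp 2 z)
  have hab :
      WithLp.toLp 2 (Sum.elim (Qh *ᵥ (Δ₁ *ᵥ z + v)) (Rh *ᵥ (Δ₂ *ᵥ z + w))) = a + b := by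
    rw [mulVec_add, mulVec_add, Sum.elim_add_add, WithLp.toLp_add]
  rw [sumElim_quadForm_eq_norm_sq hQh hRh, sumElim_quadForm_eq_norm_sq hQh hRh, hab,
    ← EuclideanSpace.norm_toLp_sq z]
  calc (1 + ε ^ 2)⁻¹ * ‖a + b‖ ^ 2
      ≤ (1 + ε ^ 2)⁻¹ * ((1 + ε ^ 2) * ‖a‖ ^ 2 + (1 + 1 / ε ^ 2) * ‖b‖ ^ 2) :=
        mul_le_mul_of_nonneg_left (norm_add_sq_le_weighted a b hε) (by positivity)
    _ = (1 + 1 / ε ^ 2) / (1 + ε ^ 2) * ‖b‖ ^ 2 + ‖a‖ ^ 2 := by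
        field_simp
        ring
    _ ≤ _ := by gcongr

theorem stmt_11_general (n m p r : ℕ) (τ ε : ℝ) (hτ : 0 < τ) (hε : 0 < ε)
    (Q : Matrix (Fin m) (Fin m) ℝ) (R : Matrix (Fin p) (Fin p) ℝ)
    (Qh : Matrix (Fin m) (Fin m) ℝ) (Rh : Matrix (Fin p) (Fin p) ℝ)
    (hQh : Qh.PosSemidef) (hRh : Rh.PosSemidef)
    (hQhsq : Qh * Qh = Q) (hRhsq : Rh * Rh = R)
    (Qt : Matrix (Fin m) (Fin m) ℝ) (Rt : Matrix (Fin p) (Fin p) ℝ)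
    (hQt : Qt = (1 + ε ^ 2)⁻¹ • Q) (hRt : Rt = (1 + ε ^ 2)⁻¹ • R)
    (X0 : Matrix (Fin n) (Fin n) ℝ)
    (x0 xbar : Fin n → ℝ) (d1 d2 : ℝ)
    (v : ℝ → Fin m → ℝ) (w : ℝ → Fin p → ℝ) (z : ℝ → Fin r → ℝ)
    (Δ₁ : ℝ → Matrix (Fin m) (Fin r) ℝ) (Δ₂ : ℝ → Matrix (Fin p) (Fin r) ℝ)
    (hnorm : ∀ t ∈ Set.Icc (0 : ℝ) τ,
      ∀ y : EuclideanSpace ℝ (Fin m ⊕ Fin p),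
        ‖(Matrix.toEuclideanLin
            (Matrix.fromCols ((Δ₁ t)ᵀ * Qh) ((Δ₂ t)ᵀ * Rh))) y‖ ≤ ‖y‖)
    (vt : ℝ → Fin m → ℝ) (wt : ℝ → Fin p → ℝ)
    (hvt : ∀ t, vt t = (Δ₁ t).mulVec (z t) + v t)
    (hwt : ∀ t, wt t = (Δ₂ t).mulVec (z t) + w t)
    (hint1 : IntervalIntegrable
      (fun t => v t ⬝ᵥ Q.mulVec (v t) + w t ⬝ᵥ R.mulVec (w t))
      MeasureTheory.volume 0 τ)
    (hint2 : IntervalIntegrable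
      (fun t => vt t ⬝ᵥ Qt.mulVec (vt t) + wt t ⬝ᵥ Rt.mulVec (wt t))
      MeasureTheory.volume 0 τ)
    (hint3 : IntervalIntegrable (fun t => z t ⬝ᵥ z t)
      MeasureTheory.volume 0 τ)
    (hnoise : (∫ t in (0 : ℝ)..τ,
        (v t ⬝ᵥ Q.mulVec (v t) + w t ⬝ᵥ R.mulVec (w t))) ≤ d1)
    (hinit : (xbar - x0) ⬝ᵥ X0.mulVec (xbar - x0) ≤ d2) :
    (xbar - x0) ⬝ᵥ X0.mulVec (xbar - x0) +
        (∫ t in (0 : ℝ)..τ,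
          (vt t ⬝ᵥ Qt.mulVec (vt t) + wt t ⬝ᵥ Rt.mulVec (wt t))) ≤
      ((1 + 1 / ε ^ 2) / (1 + ε ^ 2)) * d1 + d2 +
        ∫ t in (0 : ℝ)..τ, z t ⬝ᵥ z t := by
  set c := (1 + 1 / ε ^ 2) / (1 + ε ^ 2)
  have hpt : ∀ t ∈ Set.Icc (0 : ℝ) τ,
      vt t ⬝ᵥ Qt *ᵥ vt t + wt t ⬝ᵥ Rt *ᵥ wt t ≤
        c * (v t ⬝ᵥ Q *ᵥ v t + w t ⬝ᵥ R *ᵥ w t) + z t ⬝ᵥ z t := by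
    intro t ht
    have h := perturbed_quadForm_le hε.ne'
      ((conjTranspose_eq_transpose_of_trivial Qh).symm.trans hQh.1)
      ((conjTranspose_eq_transpose_of_trivial Rh).symm.trans hRh.1) (hnorm t ht) (v t) (w t) (z t)
    rw [hQhsq, hRhsq, ← hvt, ← hwt] at h
    simpa only [hQt, hRt, smul_mulVec, dotProduct_smul, smul_eq_mul, mul_add] using h
  have hmono := intervalIntegral.integral_mono_on hτ.le hint2 ((hint1.const_mul c).add hint3) hpt
  rw [intervalIntegral.integral_add (hint1.const_mul c) hint3,
    intervalIntegral.integral_const_mul] at hmono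
  have hnoise' := mul_le_mul_of_nonneg_left hnoise (by positivity : (0 : ℝ) ≤ c)
  linarith

/-- The integral quadratic constraint: given τ, ε > 0, positive definite
weights Q, R with psd square roots Qh, Rh, Q̃ = Q/(1+ε²), R̃ = R/(1+ε²),
positive definite X₀, vectors x₀, x̄, constants d₁, d₂ > 0, measurable noises
v, w, uncertainty output z, and measurable uncertainty matrices Δ₁(t), Δ₂(t)
whose block [Δ₁ᵀQ^{1/2} Δ₂ᵀR^{1/2}] has operator norm ≤ 1 pointwise, if
∫₀^τ (vᵀQv + wᵀRw) ≤ d₁ and (x̄−x₀)ᵀX₀(x̄−x₀) ≤ d₂, then with ṽ = Δ₁z + v,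
w̃ = Δ₂z + w we get
(x̄−x₀)ᵀX₀(x̄−x₀) + ∫₀^τ (ṽᵀQ̃ṽ + w̃ᵀR̃w̃) ≤ ((1+1/ε²)/(1+ε²))d₁ + d₂ + ∫₀^τ ‖z‖². -/
theorem stmt_11 (n m p r : ℕ) (τ ε : ℝ) (hτ : 0 < τ) (hε : 0 < ε)
    (Q : Matrix (Fin m) (Fin m) ℝ) (R : Matrix (Fin p) (Fin p) ℝ)
    (hQ : Q.PosDef) (hR : R.PosDef)
    (Qh : Matrix (Fin m) (Fin m) ℝ) (Rh : Matrix (Fin p) (Fin p) ℝ)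
    (hQh : Qh.PosSemidef) (hRh : Rh.PosSemidef)
    (hQhsq : Qh * Qh = Q) (hRhsq : Rh * Rh = R)
    (Qt : Matrix (Fin m) (Fin m) ℝ) (Rt : Matrix (Fin p) (Fin p) ℝ)
    (hQt : Qt = (1 + ε ^ 2)⁻¹ • Q) (hRt : Rt = (1 + ε ^ 2)⁻¹ • R)
    (X0 : Matrix (Fin n) (Fin n) ℝ) (hX0 : X0.PosDef)
    (x0 xbar : Fin n → ℝ) (d1 d2 : ℝ) (hd1 : 0 < d1) (hd2 : 0 < d2)
    (v : ℝ → Fin m → ℝ) (w : ℝ → Fin p → ℝ) (z : ℝ → Fin r → ℝ)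
    (hv : Measurable v) (hw : Measurable w) (hz : Measurable z)
    (Δ₁ : ℝ → Matrix (Fin m) (Fin r) ℝ) (Δ₂ : ℝ → Matrix (Fin p) (Fin r) ℝ)
    (hΔ₁ : ∀ i j, Measurable fun t => Δ₁ t i j)
    (hΔ₂ : ∀ i j, Measurable fun t => Δ₂ t i j)
    (hnorm : ∀ t ∈ Set.Icc (0 : ℝ) τ,
      ∀ y : EuclideanSpace ℝ (Fin m ⊕ Fin p),
        ‖(Matrix.toEuclideanLin
            (Matrix.fromCols ((Δ₁ t)ᵀ * Qh) ((Δ₂ t)ᵀ * Rh))) y‖ ≤ ‖y‖)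
    (vt : ℝ → Fin m → ℝ) (wt : ℝ → Fin p → ℝ)
    (hvt : ∀ t, vt t = (Δ₁ t).mulVec (z t) + v t)
    (hwt : ∀ t, wt t = (Δ₂ t).mulVec (z t) + w t)
    (hint1 : IntervalIntegrable
      (fun t => v t ⬝ᵥ Q.mulVec (v t) + w t ⬝ᵥ R.mulVec (w t))
      MeasureTheory.volume 0 τ)
    (hint2 : IntervalIntegrable
      (fun t => vt t ⬝ᵥ Qt.mulVec (vt t) + wt t ⬝ᵥ Rt.mulVec (wt t))
      MeasureTheory.volume 0 τ)
    (hint3 : IntervalIntegrable (fun t => z t ⬝ᵥ z t)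
      MeasureTheory.volume 0 τ)
    (hnoise : (∫ t in (0 : ℝ)..τ,
        (v t ⬝ᵥ Q.mulVec (v t) + w t ⬝ᵥ R.mulVec (w t))) ≤ d1)
    (hinit : (xbar - x0) ⬝ᵥ X0.mulVec (xbar - x0) ≤ d2) :
    (xbar - x0) ⬝ᵥ X0.mulVec (xbar - x0) +
        (∫ t in (0 : ℝ)..τ,
          (vt t ⬝ᵥ Qt.mulVec (vt t) + wt t ⬝ᵥ Rt.mulVec (wt t))) ≤
      ((1 + 1 / ε ^ 2) / (1 + ε ^ 2)) * d1 + d2 +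
        ∫ t in (0 : ℝ)..τ, z t ⬝ᵥ z t :=
  stmt_11_general n m p r τ ε hτ hε Q R Qh Rh hQh hRh hQhsq hRhsq Qt Rt hQt hRt X0 x0 xbar d1 d2 v w
    z Δ₁ Δ₂ hnorm vt wt hvt hwt hint1 hint2 hint3 hnoise hinit
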